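/- arXiv:1712.02510 — 2 statements merged into one kernel-verified Lean document; each statement's English description precedes it below -/
import Mathlib

section
/- Let ρ : ℝ³ → ℝ be a smooth, ℤ³-periodic function with ρ(x) > 0 for every x. Then ∫_{[0,1]³} ρ(x) |∇² log ρ(x)|² dx ≥ (1/8) ∫_{[0,1]³} |∇(ρ(x)^{1/4})|⁴ dx, where |∇g|⁴ = (Σ_{i=1}^3 (∂_i g)²)². -/
open MeasureTheory

/-- Partial derivative in direction `i` of a function on `ℝ³` (realized as `Fin 3 → ℝ`). -/
noncomputable def pd (i : Fin 3) (f : (Fin 3 → ℝ) → ℝ) (x : Fin 3 → ℝ) : ℝ :=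
  fderiv ℝ f x (Pi.single i 1)

section Aux

lemma contDiff_pd {f : (Fin 3 → ℝ) → ℝ} (hf : ContDiff ℝ (⊤ : ℕ∞) f) (i : Fin 3) :
    ContDiff ℝ (⊤ : ℕ∞) (pd i f) :=
  (hf.fderiv_right (m := (⊤ : ℕ∞)) (by simp)).clm_apply contDiff_const

lemma pd_periodic {f : (Fin 3 → ℝ) → ℝ} (hf : ContDiff ℝ (⊤ : ℕ∞) f)
    (hp : ∀ (x : Fin 3 → ℝ) (k : Fin 3 → ℤ), f (x + fun i => (k i : ℝ)) = f x)
    (i : Fin 3) (x : Fin 3 → ℝ) (k : Fin 3 → ℤ) :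
    pd i f (x + fun j => (k j : ℝ)) = pd i f x := by
  have hfe : f ∘ (fun y => y + fun j => (k j : ℝ)) = f := funext fun y => hp y k
  have h1 : HasFDerivAt (f ∘ (fun y => y + fun j => (k j : ℝ)))
      (fderiv ℝ f (x + fun j => (k j : ℝ))) x := by
    have h2 := ((hf.differentiable (by simp)) _).hasFDerivAt.comp x
      ((hasFDerivAt_id x).add_const (fun j => (k j : ℝ)))
    simpa using h2
  rw [hfe] at h1
  unfold pd
  rw [h1.fderiv]

lemma pd_mul {f g : (Fin 3 → ℝ) → ℝ} {x : Fin 3 → ℝ} (hf : DifferentiableAt ℝ f x)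
    (hg : DifferentiableAt ℝ g x) (i : Fin 3) :
    pd i (fun y => f y * g y) x = pd i f x * g x + f x * pd i g x := by
  unfold pd
  rw [fderiv_fun_mul hf hg]
  simp only [ContinuousLinearMap.add_apply, ContinuousLinearMap.smul_apply, smul_eq_mul]
  ring

lemma pd_sum {f : Fin 3 → (Fin 3 → ℝ) → ℝ} {x : Fin 3 → ℝ}
    (hf : ∀ j, DifferentiableAt ℝ (f j) x) (i : Fin 3) :
    pd i (fun y => ∑ j, f j y) x = ∑ j, pd i (f j) x := by
  unfold pd
  rw [fderiv_fun_sum (fun j _ => hf j)]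
  simp

lemma pd_log {ρ : (Fin 3 → ℝ) → ℝ} (hρ : ContDiff ℝ (⊤ : ℕ∞) ρ) (hpos : ∀ x, 0 < ρ x)
    (i : Fin 3) (x : Fin 3 → ℝ) :
    pd i ρ x = ρ x * pd i (fun z => Real.log (ρ z)) x := by
  have h1 : HasFDerivAt (fun z => Real.log (ρ z)) ((ρ x)⁻¹ • fderiv ℝ ρ x) x :=
    (Real.hasDerivAt_log (hpos x).ne').comp_hasFDerivAt x (hρ.differentiable (by simp) x).hasFDerivAt
  have h2 : pd i (fun z => Real.log (ρ z)) x = (ρ x)⁻¹ * pd i ρ x := by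
    unfold pd; rw [h1.fderiv]; simp
  rw [h2, mul_inv_cancel_left₀ (hpos x).ne']

lemma pd_rpow {ρ : (Fin 3 → ℝ) → ℝ} (hρ : ContDiff ℝ (⊤ : ℕ∞) ρ) (hpos : ∀ x, 0 < ρ x)
    (i : Fin 3) (x : Fin 3 → ℝ) :
    pd i (fun z => ρ z ^ (1/4 : ℝ)) x
      = (1/4) * ρ x ^ (1/4 : ℝ) * pd i (fun z => Real.log (ρ z)) x := by
  have h1 : HasFDerivAt (fun z => ρ z ^ (1/4 : ℝ))
      (((1/4 : ℝ) * ρ x ^ ((1/4 : ℝ) - 1)) • fderiv ℝ ρ x) x :=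
    (Real.hasDerivAt_rpow_const (Or.inl (hpos x).ne')).comp_hasFDerivAt x
      (hρ.differentiable (by simp) x).hasFDerivAt
  have h2 : pd i (fun z => ρ z ^ (1/4 : ℝ)) x
      = (1/4 : ℝ) * ρ x ^ ((1/4 : ℝ) - 1) * pd i ρ x := by
    unfold pd; rw [h1.fderiv]; simp
  rw [h2, pd_log hρ hpos i x]
  have h3 : ρ x ^ ((1/4 : ℝ) - 1) * ρ x = ρ x ^ (1/4 : ℝ) := by
    nth_rewrite 2 [← Real.rpow_one (ρ x)]
    rw [← Real.rpow_add (hpos x)]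
    norm_num
  rw [← h3]
  ring

lemma divergence_zero (F : Fin 3 → (Fin 3 → ℝ) → ℝ) (hF : ∀ i, ContDiff ℝ (⊤ : ℕ∞) (F i))
    (hFper : ∀ i (x : Fin 3 → ℝ) (k : Fin 3 → ℤ), F i (x + fun j => (k j : ℝ)) = F i x) :
    ∫ x in Set.Icc (0 : Fin 3 → ℝ) 1, ∑ i, pd i (F i) x = 0 := by
  have hcont : ∀ i, Continuous (pd i (F i)) := fun i => (contDiff_pd (hF i) i).continuous
  have key := MeasureTheory.integral_divergence_of_hasFDerivAt_off_countable'
    (n := 2) (0 : Fin 3 → ℝ) 1 (by intro i; norm_num) F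
    (fun i x => fderiv ℝ (F i) x) ∅ Set.countable_empty
    (fun i => ((hF i).continuous).continuousOn)
    (fun x _ i => (((hF i).differentiable (by simp)) x).hasFDerivAt)
    (((continuous_finset_sum Finset.univ fun i _ => hcont i)).integrableOn_Icc)
  have hface : ∀ i : Fin 3, (∫ x in Set.Icc ((0 : Fin 3 → ℝ) ∘ Fin.succAbove i)
        ((1 : Fin 3 → ℝ) ∘ Fin.succAbove i), F i (Fin.insertNth i ((1 : Fin 3 → ℝ) i) x)) -
      ∫ x in Set.Icc ((0 : Fin 3 → ℝ) ∘ Fin.succAbove i) ((1 : Fin 3 → ℝ) ∘ Fin.succAbove i),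
        F i (Fin.insertNth i ((0 : Fin 3 → ℝ) i) x) = 0 := by
    intro i
    have h1 : ∀ x : Fin 2 → ℝ, Fin.insertNth i ((1 : Fin 3 → ℝ) i) x
        = Fin.insertNth i ((0 : Fin 3 → ℝ) i) x
            + fun j => ((Pi.single i 1 : Fin 3 → ℤ) j : ℝ) := by
      intro x
      funext j
      rcases eq_or_ne j i with rfl | hj
      · simp
      · rcases Fin.exists_succAbove_eq hj with ⟨m, rfl⟩
        simp [Pi.single_apply, Fin.succAbove_ne i m, (Fin.succAbove_ne i m)]
    rw [sub_eq_zero]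
    refine setIntegral_congr_fun measurableSet_Icc fun x _ => ?_
    rw [h1 x, hFper i _ (Pi.single i 1)]
  rw [show (fun x => ∑ i, pd i (F i) x)
      = fun x => ∑ i, fderiv ℝ (F i) x (Pi.single i 1) from rfl] at *
  rw [key, Finset.sum_eq_zero fun i _ => hface i]

end Aux

section Main

variable (ρ : (Fin 3 → ℝ) → ℝ)

/-- `vᵢ = ∂ᵢ log ρ`. -/
noncomputable def vv (i : Fin 3) (x : Fin 3 → ℝ) : ℝ :=
  pd i (fun z => Real.log (ρ z)) x

/-- `S = |∇ log ρ|²`. -/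
noncomputable def SS (x : Fin 3 → ℝ) : ℝ := ∑ j, (vv ρ j x) ^ 2

/-- Hessian of `log ρ`. -/
noncomputable def HH (i j : Fin 3) (x : Fin 3 → ℝ) : ℝ :=
  pd i (fun y => pd j (fun z => Real.log (ρ z)) y) x

/-- The vector field `F = ρ ∇(log ρ) |∇ log ρ|²`. -/
noncomputable def FF (i : Fin 3) (x : Fin 3 → ℝ) : ℝ := ρ x * (vv ρ i x * SS ρ x)

variable (hρ : ContDiff ℝ (⊤ : ℕ∞) ρ) (hpos : ∀ x, 0 < ρ x)
  (hper : ∀ (x : Fin 3 → ℝ) (k : Fin 3 → ℤ), ρ (x + fun i => (k i : ℝ)) = ρ x)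

include hρ hpos

lemma uu_smooth : ContDiff ℝ (⊤ : ℕ∞) (fun z => Real.log (ρ z)) :=
  hρ.log fun x => (hpos x).ne'

lemma vv_smooth (i : Fin 3) : ContDiff ℝ (⊤ : ℕ∞) (vv ρ i) :=
  contDiff_pd (uu_smooth ρ hρ hpos) i

lemma SS_smooth : ContDiff ℝ (⊤ : ℕ∞) (SS ρ) :=
  ContDiff.sum fun j _ => (vv_smooth ρ hρ hpos j).pow 2

lemma FF_smooth (i : Fin 3) : ContDiff ℝ (⊤ : ℕ∞) (FF ρ i) :=
  hρ.mul ((vv_smooth ρ hρ hpos i).mul (SS_smooth ρ hρ hpos))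

omit hρ hpos in
lemma HH_eq (i j : Fin 3) (x : Fin 3 → ℝ) : HH ρ i j x = pd i (vv ρ j) x := rfl

lemma HH_smooth (i j : Fin 3) : ContDiff ℝ (⊤ : ℕ∞) (HH ρ i j) :=
  contDiff_pd (vv_smooth ρ hρ hpos j) i

lemma pd_SS (i : Fin 3) (x : Fin 3 → ℝ) :
    pd i (SS ρ) x = ∑ j, 2 * (vv ρ j x * HH ρ i j x) := by
  have hd : ∀ j : Fin 3, DifferentiableAt ℝ (vv ρ j) x := fun j =>
    (vv_smooth ρ hρ hpos j).differentiable (by simp) x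
  have h0 : SS ρ = fun y => ∑ j, (fun j y => vv ρ j y * vv ρ j y) j y := by
    funext y; simp [SS, pow_two]
  rw [h0, pd_sum (f := fun j y => vv ρ j y * vv ρ j y) (fun j => ((hd j).mul (hd j))) i]
  refine Finset.sum_congr rfl fun j _ => ?_
  rw [pd_mul (hd j) (hd j) i, ← HH_eq]
  ring

lemma pd_FF (i : Fin 3) (x : Fin 3 → ℝ) :
    pd i (FF ρ i) x = ρ x * vv ρ i x * (vv ρ i x * SS ρ x)
      + ρ x * (HH ρ i i x * SS ρ x + vv ρ i x * ∑ j, 2 * (vv ρ j x * HH ρ i j x)) := by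
  have hd : ∀ j : Fin 3, DifferentiableAt ℝ (vv ρ j) x := fun j =>
    (vv_smooth ρ hρ hpos j).differentiable (by simp) x
  have hdS : DifferentiableAt ℝ (SS ρ) x := (SS_smooth ρ hρ hpos).differentiable (by simp) x
  have hdρ : DifferentiableAt ℝ ρ x := hρ.differentiable (by simp) x
  have h0 : FF ρ i = fun y => ρ y * (fun y => vv ρ i y * SS ρ y) y := rfl
  have hlog : pd i ρ x = ρ x * vv ρ i x := pd_log hρ hpos i x
  rw [h0, pd_mul (g := fun y => vv ρ i y * SS ρ y) hdρ ((hd i).mul hdS) i, pd_mul (hd i) hdS i,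
    pd_SS ρ hρ hpos i x, ← HH_eq, hlog]

end Main

/-- If `ρ : ℝ³ → ℝ` is smooth, `ℤ³`-periodic and everywhere positive, then
`∫_{[0,1]³} ρ |∇² log ρ|² ≥ (1/8) ∫_{[0,1]³} |∇(ρ^{1/4})|⁴`. -/
theorem inequality_hessian_log_quarter_power
    (ρ : (Fin 3 → ℝ) → ℝ)
    (hρ : ContDiff ℝ (⊤ : ℕ∞) ρ)
    (hper : ∀ (x : Fin 3 → ℝ) (k : Fin 3 → ℤ), ρ (x + fun i => (k i : ℝ)) = ρ x)
    (hpos : ∀ x, 0 < ρ x) :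
    (1 / 8 : ℝ) *
      ∫ x in Set.Icc (0 : Fin 3 → ℝ) 1,
        (∑ i, (pd i (fun z => ρ z ^ (1 / 4 : ℝ)) x) ^ 2) ^ 2
    ≤ ∫ x in Set.Icc (0 : Fin 3 → ℝ) 1,
        ρ x * ∑ i, ∑ j, (pd i (fun y => pd j (fun z => Real.log (ρ z)) y) x) ^ 2 := by
  have hu := uu_smooth ρ hρ hpos
  have huper : ∀ (x : Fin 3 → ℝ) (k : Fin 3 → ℤ),
      (fun z => Real.log (ρ z)) (x + fun j => (k j : ℝ)) = Real.log (ρ x) := by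
    intro x k; simp only [hper x k]
  have hvper : ∀ i (x : Fin 3 → ℝ) (k : Fin 3 → ℤ),
      vv ρ i (x + fun j => (k j : ℝ)) = vv ρ i x := fun i x k => pd_periodic hu huper i x k
  have hSper : ∀ (x : Fin 3 → ℝ) (k : Fin 3 → ℤ),
      SS ρ (x + fun j => (k j : ℝ)) = SS ρ x := by
    intro x k; simp only [SS, hvper _ x k]
  have hFFper : ∀ i (x : Fin 3 → ℝ) (k : Fin 3 → ℤ),
      FF ρ i (x + fun j => (k j : ℝ)) = FF ρ i x := by
    intro i x k; simp only [FF, hper x k, hvper i x k, hSper x k]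
  have hdiv0 : ∫ x in Set.Icc (0 : Fin 3 → ℝ) 1, ∑ i, pd i (FF ρ i) x = 0 :=
    divergence_zero (FF ρ) (fun i => FF_smooth ρ hρ hpos i) hFFper
  have hdivpt : ∀ x, ∑ i, pd i (FF ρ i) x
      = ρ x * SS ρ x ^ 2 + ρ x * ((∑ i, HH ρ i i x) * SS ρ x
          + 2 * ∑ i, ∑ j, vv ρ i x * vv ρ j x * HH ρ i j x) := by
    intro x
    simp only [pd_FF ρ hρ hpos, SS, Fin.sum_univ_three]
    ring
  -- continuity
  have cv : ∀ i, Continuous (vv ρ i) := fun i => (vv_smooth ρ hρ hpos i).continuous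
  have cH : ∀ i j, Continuous (HH ρ i j) := fun i j => (HH_smooth ρ hρ hpos i j).continuous
  have cS : Continuous (SS ρ) := (SS_smooth ρ hρ hpos).continuous
  have cρ : Continuous ρ := hρ.continuous
  have c1 : Continuous (fun x => ρ x * SS ρ x ^ 2) := cρ.mul (cS.pow 2)
  have cQ : Continuous (fun x => ∑ i, ∑ j, (HH ρ i j x) ^ 2) :=
    continuous_finset_sum _ fun i _ => continuous_finset_sum _ fun j _ => (cH i j).pow 2
  have cG : Continuous (fun x => ρ x * ((∑ i, HH ρ i i x) * SS ρ x
      + 2 * ∑ i, ∑ j, vv ρ i x * vv ρ j x * HH ρ i j x)) := by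
    refine cρ.mul (((continuous_finset_sum _ fun i _ => cH i i).mul cS).add
      (continuous_const.mul (continuous_finset_sum _ fun i _ =>
        continuous_finset_sum _ fun j _ => ((cv i).mul (cv j)).mul (cH i j))))
  have cρQ : Continuous (fun x => ρ x * ∑ i, ∑ j, (HH ρ i j x) ^ 2) := cρ.mul cQ
  have cRHS : Continuous (fun x => ρ x * (14 * (∑ i, ∑ j, (HH ρ i j x) ^ 2)
      + SS ρ x ^ 2 / 4)) := cρ.mul ((continuous_const.mul cQ).add ((cS.pow 2).div_const 4))
  -- main integral identities
  set I1 := ∫ x in Set.Icc (0 : Fin 3 → ℝ) 1, ρ x * SS ρ x ^ 2 with hI1def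
  set I3 := ∫ x in Set.Icc (0 : Fin 3 → ℝ) 1, ρ x * ∑ i, ∑ j, (HH ρ i j x) ^ 2 with hI3def
  have h0 : I1 + (∫ x in Set.Icc (0 : Fin 3 → ℝ) 1, ρ x * ((∑ i, HH ρ i i x) * SS ρ x
      + 2 * ∑ i, ∑ j, vv ρ i x * vv ρ j x * HH ρ i j x)) = 0 := by
    rw [hI1def, ← integral_add c1.integrableOn_Icc cG.integrableOn_Icc, ← hdiv0]
    exact setIntegral_congr_fun measurableSet_Icc fun x _ => (hdivpt x).symm
  -- pointwise bound
  have hptwise : ∀ x : Fin 3 → ℝ,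
      -(ρ x * ((∑ i, HH ρ i i x) * SS ρ x
        + 2 * ∑ i, ∑ j, vv ρ i x * vv ρ j x * HH ρ i j x))
      ≤ ρ x * (14 * (∑ i, ∑ j, (HH ρ i j x) ^ 2) + SS ρ x ^ 2 / 4) := by
    intro x
    set T := ∑ i, HH ρ i i x
    set B := ∑ i, ∑ j, vv ρ i x * vv ρ j x * HH ρ i j x
    set Q := ∑ i, ∑ j, (HH ρ i j x) ^ 2 with hQdef
    set S := SS ρ x with hSdef
    have hSx : 0 ≤ S := Finset.sum_nonneg fun j _ => sq_nonneg _
    have hQx : 0 ≤ Q := Finset.sum_nonneg fun i _ => Finset.sum_nonneg fun j _ => sq_nonneg _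
    have hT : T ^ 2 ≤ 3 * Q := by
      have h1 : (∑ i, HH ρ i i x * 1) ^ 2
          ≤ (∑ i, (HH ρ i i x) ^ 2) * ∑ _i : Fin 3, (1 : ℝ) ^ 2 :=
        Finset.sum_mul_sq_le_sq_mul_sq _ _ _
      simp only [mul_one, one_pow] at h1
      have h2 : ∑ i : Fin 3, (HH ρ i i x) ^ 2 ≤ Q :=
        Finset.sum_le_sum fun i _ => Finset.single_le_sum (f := fun j => (HH ρ i j x) ^ 2)
          (fun j _ => sq_nonneg _) (Finset.mem_univ i)
      simp at h1
      nlinarith [h1, h2]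
    have hB : B ^ 2 ≤ S ^ 2 * Q := by
      have h1 : (∑ i, vv ρ i x * (∑ j, vv ρ j x * HH ρ i j x)) ^ 2
          ≤ (∑ i, (vv ρ i x) ^ 2) * ∑ i, (∑ j, vv ρ j x * HH ρ i j x) ^ 2 :=
        Finset.sum_mul_sq_le_sq_mul_sq _ _ _
      have h2 : ∀ i, (∑ j, vv ρ j x * HH ρ i j x) ^ 2
          ≤ (∑ j, (vv ρ j x) ^ 2) * ∑ j, (HH ρ i j x) ^ 2 := fun i =>
        Finset.sum_mul_sq_le_sq_mul_sq _ _ _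
      have h3 : ∑ i, (∑ j, vv ρ j x * HH ρ i j x) ^ 2 ≤ (∑ j, (vv ρ j x) ^ 2) * Q := by
        rw [hQdef, Finset.mul_sum]
        exact Finset.sum_le_sum fun i _ => h2 i
      have hSv : 0 ≤ ∑ i, (vv ρ i x) ^ 2 := Finset.sum_nonneg fun i _ => sq_nonneg _
      have hBe : B = ∑ i, vv ρ i x * (∑ j, vv ρ j x * HH ρ i j x) := by
        refine Finset.sum_congr rfl fun i _ => ?_
        rw [Finset.mul_sum]
        exact Finset.sum_congr rfl fun j _ => by ring
      have hSe : S = ∑ i, (vv ρ i x) ^ 2 := rfl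
      calc B ^ 2 = (∑ i, vv ρ i x * (∑ j, vv ρ j x * HH ρ i j x)) ^ 2 := by rw [hBe]
        _ ≤ (∑ i, (vv ρ i x) ^ 2) * ∑ i, (∑ j, vv ρ j x * HH ρ i j x) ^ 2 := h1
        _ ≤ (∑ i, (vv ρ i x) ^ 2) * ((∑ j, (vv ρ j x) ^ 2) * Q) :=
            mul_le_mul_of_nonneg_left h3 hSv
        _ = S ^ 2 * Q := by rw [hSe]; ring
    have key : -(T * S + 2 * B) ≤ 14 * Q + S ^ 2 / 4 := by
      nlinarith [sq_nonneg (4 * T + S), sq_nonneg (8 * Q - S ^ 2 / 8),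
        sq_nonneg (2 * B + 8 * Q + S ^ 2 / 8), sq_nonneg (8 * Q + S ^ 2 / 8),
        sq_nonneg (S * T)]
    calc -(ρ x * (T * S + 2 * B)) = ρ x * (-(T * S + 2 * B)) := by ring
      _ ≤ ρ x * (14 * Q + S ^ 2 / 4) := mul_le_mul_of_nonneg_left key (hpos x).le
  have hmono : (∫ x in Set.Icc (0 : Fin 3 → ℝ) 1,
        -(ρ x * ((∑ i, HH ρ i i x) * SS ρ x
          + 2 * ∑ i, ∑ j, vv ρ i x * vv ρ j x * HH ρ i j x)))
      ≤ ∫ x in Set.Icc (0 : Fin 3 → ℝ) 1,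
          ρ x * (14 * (∑ i, ∑ j, (HH ρ i j x) ^ 2) + SS ρ x ^ 2 / 4) :=
    setIntegral_mono_on cG.neg.integrableOn_Icc cRHS.integrableOn_Icc
      measurableSet_Icc fun x _ => hptwise x
  have hnegint : (∫ x in Set.Icc (0 : Fin 3 → ℝ) 1,
        -(ρ x * ((∑ i, HH ρ i i x) * SS ρ x
          + 2 * ∑ i, ∑ j, vv ρ i x * vv ρ j x * HH ρ i j x))) = I1 := by
    rw [integral_neg]
    linarith [h0]
  have hsplit : (∫ x in Set.Icc (0 : Fin 3 → ℝ) 1,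
        ρ x * (14 * (∑ i, ∑ j, (HH ρ i j x) ^ 2) + SS ρ x ^ 2 / 4))
      = 14 * I3 + (1 / 4) * I1 := by
    have he : ∀ x : Fin 3 → ℝ, ρ x * (14 * (∑ i, ∑ j, (HH ρ i j x) ^ 2) + SS ρ x ^ 2 / 4)
        = 14 * (ρ x * ∑ i, ∑ j, (HH ρ i j x) ^ 2) + (1 / 4) * (ρ x * SS ρ x ^ 2) := by
      intro x; ring
    rw [show (fun x => ρ x * (14 * (∑ i, ∑ j, (HH ρ i j x) ^ 2) + SS ρ x ^ 2 / 4))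
        = fun x => 14 * (ρ x * ∑ i, ∑ j, (HH ρ i j x) ^ 2) + (1 / 4) * (ρ x * SS ρ x ^ 2)
      from funext he]
    rw [integral_add (f := fun x => 14 * (ρ x * ∑ i, ∑ j, (HH ρ i j x) ^ 2))
      (g := fun x => (1 / 4) * (ρ x * SS ρ x ^ 2)) ((continuous_const.mul cρQ).integrableOn_Icc)
      (Continuous.integrableOn_Icc (f := fun x => (1 / 4 : ℝ) * (ρ x * SS ρ x ^ 2)) (continuous_const.mul c1)), integral_const_mul, integral_const_mul]
  have hI1nn : 0 ≤ I1 := setIntegral_nonneg measurableSet_Icc fun x _ =>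
    mul_nonneg (hpos x).le (sq_nonneg _)
  have hI3nn : 0 ≤ I3 := setIntegral_nonneg measurableSet_Icc fun x _ =>
    mul_nonneg (hpos x).le (Finset.sum_nonneg fun i _ => Finset.sum_nonneg fun j _ =>
      sq_nonneg _)
  -- rewrite LHS
  have hLHSpt : ∀ x : Fin 3 → ℝ,
      (∑ i, (pd i (fun z => ρ z ^ (1 / 4 : ℝ)) x) ^ 2) ^ 2
        = (1 / 256) * (ρ x * SS ρ x ^ 2) := by
    intro x
    have hr4 : (ρ x ^ (1 / 4 : ℝ)) ^ (4 : ℕ) = ρ x := by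
      rw [← Real.rpow_natCast (ρ x ^ (1 / 4 : ℝ)) 4, ← Real.rpow_mul (hpos x).le]
      norm_num
    have he : ∀ i, pd i (fun z => ρ z ^ (1 / 4 : ℝ)) x
        = (1 / 4) * ρ x ^ (1 / 4 : ℝ) * vv ρ i x := fun i => pd_rpow hρ hpos i x
    simp only [he, SS, Fin.sum_univ_three]
    nlinarith [hr4, sq_nonneg (ρ x ^ (1/4 : ℝ))]
  have hLHS : (∫ x in Set.Icc (0 : Fin 3 → ℝ) 1,
        (∑ i, (pd i (fun z => ρ z ^ (1 / 4 : ℝ)) x) ^ 2) ^ 2) = (1 / 256) * I1 := by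
    rw [hI1def, ← integral_const_mul]
    exact setIntegral_congr_fun measurableSet_Icc fun x _ => hLHSpt x
  show (1 / 8 : ℝ) * ∫ x in Set.Icc (0 : Fin 3 → ℝ) 1,
        (∑ i, (pd i (fun z => ρ z ^ (1 / 4 : ℝ)) x) ^ 2) ^ 2 ≤ I3
  rw [hLHS]
  rw [hnegint, hsplit] at hmono
  linarith
end

section
/- For all real parameters 0 < n₁ ≤ n₂ and every y ≥ 0 one has φ̃_{n₁}(y) ≤ φ̃_{n₂}(y); that is, for each fixed y the value φ̃_n(y) is nondecreasing as a function of n. -/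
/-- `C_n = e(1+n)² − 1`. -/
noncomputable def Cn (n : ℝ) : ℝ := Real.exp 1 * (1 + n) ^ 2 - 1

/-- The cut-off function `φ̃_n` of the Mellet–Vasseur argument (Lemma 4.2 of the paper). -/
noncomputable def phiTilde (n y : ℝ) : ℝ :=
  if y ≤ n then (1 + y) * Real.log (1 + y)
  else if y ≤ Cn n then
    2 * (1 + Real.log (1 + n)) * y - (1 + y) * Real.log (1 + y)
      + 2 * (Real.log (1 + n) - n)
  else Real.exp 1 * (1 + n) ^ 2 - 2 * n - 2

/-- The derivative `φ̃_n'` of the cut-off function `φ̃_n`. -/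
noncomputable def Dn (n y : ℝ) : ℝ :=
  if y ≤ n then 1 + Real.log (1 + y)
  else if y ≤ Cn n then 2 * (1 + Real.log (1 + n)) - 1 - Real.log (1 + y)
  else 0

/-- The second derivative `φ̃_n''` of the cut-off function `φ̃_n`
(away from the junction points `y = n`, `y = C_n`). -/
noncomputable def phi2 (n y : ℝ) : ℝ :=
  if y < n then 1 / (1 + y)
  else if y < Cn n then -(1 / (1 + y))
  else 0

/-!
Write `φ(y) = (1+y) log(1+y)` and `T_a` for its tangent line at `a`. On `[n, C_n]` the
function `φ̃_n` is `2 T_n − φ`, the reflection of the convex `φ` across `T_n`; it increases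
up to its critical point `C_n` and is frozen afterwards. Tangents of a convex function taken
at later points lie higher to the right of both, so `2 T_{n₁} − φ ≤ 2 T_{n₂} − φ` beyond
`n₂`, while below `n₂` the function `φ̃_{n₂} = φ` dominates every `φ̃_n`. Beyond `C_{n₁}`,
`φ̃_{n₁}` is frozen and `φ̃_{n₂}` is nondecreasing.
-/

open Real Set

lemma mul_log_add_tangent_le {u v : ℝ} (hu : 0 < u) (hv : 0 < v) :
    v * log v + (1 + log v) * (u - v) ≤ u * log u := by
  have h := log_le_sub_one_of_pos (div_pos hv hu)
  rw [log_div hv.ne' hu.ne', le_sub_iff_add_le, le_div_iff₀ hu] at h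
  nlinarith

noncomputable def phi (y : ℝ) : ℝ := (1 + y) * log (1 + y)

noncomputable def phiTangent (a y : ℝ) : ℝ := phi a + (1 + log (1 + a)) * (y - a)

lemma phiTangent_le_phi {a y : ℝ} (ha : -1 < a) (hy : -1 < y) : phiTangent a y ≤ phi y := by
  have h := mul_log_add_tangent_le (u := 1 + y) (v := 1 + a) (by linarith) (by linarith)
  unfold phiTangent phi
  linarith

lemma phiTangent_le_phiTangent {a b y : ℝ} (ha : -1 < a) (hab : a ≤ b) (hby : b ≤ y) :
    phiTangent a y ≤ phiTangent b y := by
  have hb : phiTangent a b ≤ phi b := phiTangent_le_phi ha (by linarith)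
  have hlog : log (1 + a) ≤ log (1 + b) := log_le_log (by linarith) (by linarith)
  have := mul_le_mul_of_nonneg_right hlog (sub_nonneg.2 hby)
  unfold phiTangent at *
  nlinarith

lemma phi_monotoneOn : MonotoneOn phi (Ici 0) := by
  rintro a (ha : 0 ≤ a) b (hb : 0 ≤ b) hab
  have h := phiTangent_le_phi (a := a) (y := b) (by linarith) (by linarith)
  have hlog : 0 ≤ log (1 + a) := log_nonneg (by linarith)
  unfold phiTangent at h
  nlinarith

lemma log_one_add_Cn {n : ℝ} (hn : 1 + n ≠ 0) : log (1 + Cn n) = 1 + 2 * log (1 + n) := by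
  rw [Cn, add_sub_cancel, log_mul (exp_ne_zero 1) (pow_ne_zero 2 hn), log_exp, log_pow]
  push_cast
  ring

lemma lt_Cn {n : ℝ} (hn : 0 ≤ n) : n < Cn n := by
  have he : 2 < exp 1 := by linarith [add_one_lt_exp (one_ne_zero (α := ℝ))]
  unfold Cn
  nlinarith

lemma Cn_le_Cn {n₁ n₂ : ℝ} (h₁ : -1 ≤ n₁) (h : n₁ ≤ n₂) : Cn n₁ ≤ Cn n₂ := by
  unfold Cn
  have : 0 ≤ 1 + n₁ := by linarith
  gcongr

lemma monotoneOn_two_phiTangent_sub_phi {n : ℝ} (hn : -1 < n) :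
    MonotoneOn (fun y => 2 * phiTangent n y - phi y) (Icc n (Cn n)) := by
  rintro a ⟨hna, -⟩ b ⟨hnb, hbC⟩ hab
  have hchord : phiTangent b a ≤ phi a := phiTangent_le_phi (by linarith) (by linarith)
  -- `b ≤ C_n` is exactly where the slope of `φ` at `b` stays below that of `2 T_n`.
  have hslope : log (1 + b) ≤ 1 + 2 * log (1 + n) := by
    rw [← log_one_add_Cn (by linarith)]
    exact log_le_log (by linarith) (by linarith)
  have := mul_le_mul_of_nonneg_right hslope (sub_nonneg.2 hab)
  unfold phiTangent at *
  nlinarith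

lemma phiTilde_of_le {n y : ℝ} (h : y ≤ n) : phiTilde n y = phi y := if_pos h

lemma phiTilde_of_mem_Icc {n y : ℝ} (h₁ : n ≤ y) (h₂ : y ≤ Cn n) :
    phiTilde n y = 2 * phiTangent n y - phi y := by
  unfold phiTilde phiTangent phi
  split_ifs with h
  · obtain rfl := le_antisymm h h₁
    ring
  · ring

lemma phiTilde_of_Cn_le {n y : ℝ} (hn : 0 ≤ n) (h : Cn n ≤ y) :
    phiTilde n y = phiTilde n (Cn n) := by
  rcases h.eq_or_lt with rfl | h
  · rfl
  have hC := lt_Cn hn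
  rw [phiTilde_of_mem_Icc hC.le le_rfl, phiTilde, if_neg (by linarith), if_neg h.not_ge]
  unfold phiTangent phi
  rw [log_one_add_Cn (by linarith)]
  unfold Cn
  ring

lemma phiTilde_le_phi {n y : ℝ} (hn : 0 ≤ n) : phiTilde n y ≤ phi y := by
  have hC := lt_Cn hn
  rcases le_or_gt y n with hy | hy
  · exact (phiTilde_of_le hy).le
  rcases le_or_gt y (Cn n) with hyC | hyC
  · rw [phiTilde_of_mem_Icc hy.le hyC]
    linarith [phiTangent_le_phi (a := n) (y := y) (by linarith) (by linarith)]
  · calc phiTilde n y = phiTilde n (Cn n) := phiTilde_of_Cn_le hn hyC.le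
      _ = 2 * phiTangent n (Cn n) - phi (Cn n) := phiTilde_of_mem_Icc hC.le le_rfl
      _ ≤ phi (Cn n) := by
        linarith [phiTangent_le_phi (a := n) (y := Cn n) (by linarith) (by linarith)]
      _ ≤ phi y := phi_monotoneOn (mem_Ici.2 (by linarith)) (mem_Ici.2 (by linarith)) hyC.le

lemma phiTilde_monotoneOn {n : ℝ} (hn : 0 ≤ n) : MonotoneOn (phiTilde n) (Ici 0) := by
  have hC := lt_Cn hn
  have hleft : MonotoneOn (phiTilde n) (Icc 0 n) :=
    (phi_monotoneOn.mono Icc_subset_Ici_self).congr fun y hy => (phiTilde_of_le hy.2).symm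
  have hmid : MonotoneOn (phiTilde n) (Icc n (Cn n)) :=
    (monotoneOn_two_phiTangent_sub_phi (by linarith)).congr fun y hy =>
      (phiTilde_of_mem_Icc hy.1 hy.2).symm
  have hright : MonotoneOn (phiTilde n) (Ici (Cn n)) :=
    monotoneOn_const.congr fun y hy => (phiTilde_of_Cn_le hn hy).symm
  have hleftMid := hleft.union_right hmid (isGreatest_Icc hn) (isLeast_Icc hC.le)
  rw [Icc_union_Icc_eq_Icc hn hC.le] at hleftMid
  rw [← Icc_union_Ici_eq_Ici (hn.trans hC.le)]
  exact hleftMid.union_right hright (isGreatest_Icc (hn.trans hC.le)) isLeast_Ici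

lemma phiTilde_le_phiTilde_of_le_Cn {n₁ n₂ y : ℝ} (h₁ : 0 ≤ n₁) (h : n₁ ≤ n₂)
    (hy : y ≤ Cn n₁) :
    phiTilde n₁ y ≤ phiTilde n₂ y := by
  rcases le_or_gt y n₂ with hy₂ | hy₂
  · exact (phiTilde_le_phi h₁).trans_eq (phiTilde_of_le hy₂).symm
  rw [phiTilde_of_mem_Icc (by linarith) hy,
    phiTilde_of_mem_Icc hy₂.le (hy.trans (Cn_le_Cn (by linarith) h))]
  linarith [phiTangent_le_phiTangent (y := y) (by linarith : -1 < n₁) h hy₂.le]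

theorem phiTilde_monotone_in_n_general
    (n₁ n₂ : ℝ) (hn₁ : 0 < n₁) (hn : n₁ ≤ n₂) (y : ℝ) :
    phiTilde n₁ y ≤ phiTilde n₂ y := by
  rcases le_or_gt y (Cn n₁) with hy | hy
  · exact phiTilde_le_phiTilde_of_le_Cn hn₁.le hn hy
  have hC : 0 ≤ Cn n₁ := hn₁.le.trans (lt_Cn hn₁.le).le
  calc phiTilde n₁ y = phiTilde n₁ (Cn n₁) := phiTilde_of_Cn_le hn₁.le hy.le
    _ ≤ phiTilde n₂ (Cn n₁) := phiTilde_le_phiTilde_of_le_Cn hn₁.le hn le_rfl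
    _ ≤ phiTilde n₂ y := phiTilde_monotoneOn (hn₁.le.trans hn) hC (hC.trans hy.le) hy.le

/-- For fixed `y ≥ 0`, `φ̃_n(y)` is nondecreasing in the parameter `n`. -/
theorem phiTilde_monotone_in_n
    (n₁ n₂ : ℝ) (hn₁ : 0 < n₁) (hn : n₁ ≤ n₂) (y : ℝ) (hy : 0 ≤ y) :
    phiTilde n₁ y ≤ phiTilde n₂ y :=
  phiTilde_monotone_in_n_general n₁ n₂ hn₁ hn y
end
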